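/- arXiv:math/0310140 — 2 statements merged into one kernel-verified Lean document; each statement's English description precedes it below -/
import Mathlib

section
/- Let k = sl(2, C) with standard basis {e, h, f}, and let M be a k-module on which h acts semisimply with finite-dimensional eigenspaces and eigenvalues bounded above. If e and f both act locally finitely on M, then M is a locally finite k-module (a direct sum of finite-dimensional k-submodules). -/
/-!
For an `h`-eigenvector `m`, the span `U` of the vectors `eⁿ m` is finite-dimensional because `e`
acts locally finitely, and it is stable under `e` and `h` since each `eⁿ m` is again an
`h`-eigenvector. The smallest `f`-stable subspace `⨆ n, fⁿ U` containing `U` is then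
finite-dimensional because `f` acts locally finitely, and the relation `[e, f] = h` shows that it
is stable under `e` and `h` as well, so it is a finite-dimensional `sl(2)`-submodule containing
`m`. As `M` is the sum of the `h`-eigenspaces, every vector lies in a finite sum of such
submodules.
-/

def ActsLocallyFinitely {M : Type*} [AddCommGroup M] [Module ℂ M]
    (T : Module.End ℂ M) : Prop :=
  ∀ m : M, FiniteDimensional ℂ (Submodule.span ℂ (Set.range fun n : ℕ => (T ^ n) m))

open LieModule Submodule

lemma Submodule.iSup_map_pow_le_comap {R M : Type*} [CommRing R] [AddCommGroup M] [Module R M]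
    (T : Module.End R M) (U : Submodule R M) :
    ⨆ n : ℕ, U.map (T ^ n) ≤ (⨆ n : ℕ, U.map (T ^ n)).comap T := by
  refine iSup_le fun n => map_le_iff_le_comap.2 fun u hu => ?_
  have hmem : T ((T ^ n) u) ∈ U.map (T ^ (n + 1)) := by
    rw [← Module.End.mul_apply, ← pow_succ']
    exact mem_map_of_mem hu
  exact le_iSup (fun n => U.map (T ^ n)) (n + 1) hmem

lemma Submodule.finiteDimensional_iSup_map_pow {M : Type*} [AddCommGroup M] [Module ℂ M]
    {T : Module.End ℂ M} (hT : ActsLocallyFinitely T) (U : Submodule ℂ M)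
    [FiniteDimensional ℂ U] : FiniteDimensional ℂ ↥(⨆ n : ℕ, U.map (T ^ n)) := by
  obtain ⟨s, rfl⟩ := (fg_iff_finiteDimensional U).2 ‹_›
  have (x : s) : FiniteDimensional ℂ (span ℂ (Set.range fun n : ℕ => (T ^ n) x)) := hT x
  refine finiteDimensional_of_le (S₂ := ⨆ x : s, span ℂ (Set.range fun n : ℕ => (T ^ n) x))
    (iSup_le fun n => (map_span_le _ _ _).2 fun x hx => ?_)
  exact mem_iSup_of_mem (⟨x, hx⟩ : s) (subset_span ⟨n, rfl⟩)

section Lie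

variable {R L M : Type*} [CommRing R] [LieRing L] [LieAlgebra R L]
  [AddCommGroup M] [Module R M] [LieRingModule L M] [LieModule R L M]

lemma Submodule.lie_mem_of_span_eq_top {s : Set L} (hs : span R s = ⊤) {N : Submodule R M}
    (hN : ∀ x ∈ s, N ≤ N.comap (toEnd R L M x)) (x : L) {m : M} (hm : m ∈ N) :
    ⁅x, m⁆ ∈ N := by
  have hx : x ∈ span R s := hs ▸ mem_top
  induction hx using span_induction with
  | mem y hy => exact hN y hy hm
  | zero => simp
  | add y z _ _ hy hz => rw [add_lie]; exact add_mem hy hz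
  | smul a y _ hy => rw [smul_lie]; exact smul_mem N a hy

variable {h e f : L}

lemma IsSl2Triple.lie_h_pow_toEnd_f (t : IsSl2Triple h e f) (m : M) (n : ℕ) :
    ⁅h, (toEnd R L M f ^ n) m⁆ =
      (toEnd R L M f ^ n) ⁅h, m⁆ - (2 * n : R) • (toEnd R L M f ^ n) m := by
  induction n with
  | zero => simp
  | succ n ih =>
    rw [pow_succ', Module.End.mul_apply, toEnd_apply_apply, leibniz_lie h, t.lie_lie_smul_f R,
      ih, lie_sub, lie_smul, neg_lie, smul_lie, Module.End.mul_apply, toEnd_apply_apply]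
    push_cast
    module

lemma IsSl2Triple.iSup_map_pow_toEnd_f_le_comap (t : IsSl2Triple h e f) {U : Submodule R M}
    (hUe : U ≤ U.comap (toEnd R L M e)) (hUh : U ≤ U.comap (toEnd R L M h))
    {x : L} (hx : x ∈ ({e, h, f} : Set L)) :
    ⨆ n : ℕ, U.map (toEnd R L M f ^ n) ≤
      (⨆ n : ℕ, U.map (toEnd R L M f ^ n)).comap (toEnd R L M x) := by
  set F := toEnd R L M f
  set W := ⨆ n : ℕ, U.map (F ^ n)
  have hmapW (n : ℕ) : U.map (F ^ n) ≤ W := le_iSup (fun n => U.map (F ^ n)) n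
  have hWf : W ≤ W.comap F := U.iSup_map_pow_le_comap F
  have hh (n : ℕ) {u : M} (hu : u ∈ U) : ⁅h, (F ^ n) u⁆ ∈ U.map (F ^ n) := by
    rw [t.lie_h_pow_toEnd_f]
    exact sub_mem (mem_map_of_mem (hUh hu)) (smul_mem _ _ (mem_map_of_mem hu))
  have he (n : ℕ) : ∀ {u : M}, u ∈ U → ⁅e, (F ^ n) u⁆ ∈ W := by
    induction n with
    | zero => intro u hu; simpa using hmapW 0 (mem_map_of_mem (f := F ^ 0) (hUe hu))
    | succ n ih =>
      intro u hu
      rw [pow_succ', Module.End.mul_apply, toEnd_apply_apply, leibniz_lie, t.lie_e_f]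
      exact add_mem (hmapW n (hh n hu)) (hWf (ih hu))
  rcases hx with rfl | rfl | rfl
  · exact iSup_le fun n => map_le_iff_le_comap.2 fun u hu => he n hu
  · exact iSup_le fun n => map_le_iff_le_comap.2 fun u hu => hmapW n (hh n hu)
  · exact hWf

end Lie

lemma LieSubmodule.finiteDimensional_sup {K L M : Type*} [Field K] [LieRing L] [LieAlgebra K L]
    [AddCommGroup M] [Module K M] [LieRingModule L M] [LieModule K L M]
    (N₁ N₂ : LieSubmodule K L M) [FiniteDimensional K N₁] [FiniteDimensional K N₂] :
    FiniteDimensional K ↥(N₁ ⊔ N₂) := by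
  have : FiniteDimensional K ↥(N₁.toSubmodule ⊔ N₂.toSubmodule) := inferInstance
  rwa [← LieSubmodule.sup_toSubmodule] at this

lemma IsSl2Triple.exists_finiteDimensional_lieSubmodule_of_lie_h_eq_smul
    {k M : Type*} [LieRing k] [LieAlgebra ℂ k] [AddCommGroup M] [Module ℂ M]
    [LieRingModule k M] [LieModule ℂ k M] {h e f : k} (t : IsSl2Triple h e f)
    (hspan : span ℂ ({e, h, f} : Set k) = ⊤)
    (he : ActsLocallyFinitely (toEnd ℂ k M e)) (hf : ActsLocallyFinitely (toEnd ℂ k M f))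
    {m : M} {c : ℂ} (hm : ⁅h, m⁆ = c • m) :
    ∃ N : LieSubmodule ℂ k M, FiniteDimensional ℂ N ∧ m ∈ N := by
  set U := span ℂ (Set.range fun n : ℕ => (toEnd ℂ k M e ^ n) m)
  have : FiniteDimensional ℂ U := he m
  have hUe : U ≤ U.comap (toEnd ℂ k M e) := span_le.2 <| Set.range_subset_iff.2 fun n =>
    subset_span ⟨n + 1, by simp only [pow_succ', Module.End.mul_apply]⟩
  have hUh : U ≤ U.comap (toEnd ℂ k M h) := span_le.2 <| Set.range_subset_iff.2 fun n => by
    change ⁅h, _⁆ ∈ U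
    rw [t.lie_h_pow_toEnd_e hm n]
    exact smul_mem _ _ (subset_span ⟨n, rfl⟩)
  set W := ⨆ n : ℕ, U.map (toEnd ℂ k M f ^ n)
  have hW (x : k) {w : M} (hw : w ∈ W) : ⁅x, w⁆ ∈ W :=
    W.lie_mem_of_span_eq_top hspan (fun _ hy => t.iSup_map_pow_toEnd_f_le_comap hUe hUh hy) x hw
  refine ⟨{ W with lie_mem := hW _ }, U.finiteDimensional_iSup_map_pow hf, ?_⟩
  have hmU : m ∈ U := subset_span ⟨0, by simp⟩
  exact le_iSup (fun n => U.map (toEnd ℂ k M f ^ n)) 0 (mem_map.2 ⟨m, hmU, by simp⟩)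

theorem sl2_locally_finite_criterion_general
    (k : Type) [LieRing k] [LieAlgebra ℂ k]
    (e hh f : k) (t : IsSl2Triple hh e f)
    (hspan : Submodule.span ℂ ({e, hh, f} : Set k) = ⊤)
    (M : Type) [AddCommGroup M] [Module ℂ M] [LieRingModule k M] [LieModule ℂ k M]
    -- `h` acts semisimply on `M` ...
    (hss : ⨆ c : ℂ, Module.End.eigenspace (LieModule.toEnd ℂ k M hh) c = (⊤ : Submodule ℂ M))
    -- `e` and `f` act locally finitely:
    (he : ActsLocallyFinitely (LieModule.toEnd ℂ k M e))
    (hf : ActsLocallyFinitely (LieModule.toEnd ℂ k M f)) :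
    ∀ m : M, ∃ N : LieSubmodule ℂ k M, FiniteDimensional ℂ N ∧ m ∈ N := by
  intro m
  have hm : m ∈ ⨆ c : ℂ, Module.End.eigenspace (toEnd ℂ k M hh) c := hss ▸ mem_top
  refine Submodule.iSup_induction _ hm
    (motive := fun x => ∃ N : LieSubmodule ℂ k M, FiniteDimensional ℂ N ∧ x ∈ N) ?_ ?_ ?_
  · exact fun c x hx => t.exists_finiteDimensional_lieSubmodule_of_lie_h_eq_smul hspan he hf
      (Module.End.mem_eigenspace_iff.1 hx)
  · exact ⟨⊥, inferInstance, zero_mem _⟩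
  · rintro x y ⟨N₁, _, hx⟩ ⟨N₂, _, hy⟩
    exact ⟨N₁ ⊔ N₂, N₁.finiteDimensional_sup N₂,
      add_mem (LieSubmodule.mem_sup_left hx) (LieSubmodule.mem_sup_right hy)⟩

/-- **An `sl(2)` local-finiteness criterion.** Let `k = sl(2, ℂ)` with standard basis
`{e, h, f}` and let `M` be a `k`-module on which `h` acts semisimply with
finite-dimensional eigenspaces whose eigenvalues are bounded above.  If `e` and `f`
both act locally finitely on `M`, then `M` is a locally finite `k`-module: every
vector lies in a finite-dimensional `k`-submodule (equivalently, `M` is a direct sum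
of finite-dimensional `k`-submodules). -/
theorem sl2_locally_finite_criterion
    (k : Type) [LieRing k] [LieAlgebra ℂ k]
    (e hh f : k) (t : IsSl2Triple hh e f)
    (hspan : Submodule.span ℂ ({e, hh, f} : Set k) = ⊤)
    (M : Type) [AddCommGroup M] [Module ℂ M] [LieRingModule k M] [LieModule ℂ k M]
    -- `h` acts semisimply on `M` ...
    (hss : ⨆ c : ℂ, Module.End.eigenspace (LieModule.toEnd ℂ k M hh) c = (⊤ : Submodule ℂ M))
    -- ... with finite-dimensional eigenspaces ...
    (hfin : ∀ c : ℂ, FiniteDimensional ℂ (Module.End.eigenspace (LieModule.toEnd ℂ k M hh) c))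
    -- ... and eigenvalues bounded above:
    (hbdd : ∃ B : ℝ, ∀ c : ℂ,
      Module.End.eigenspace (LieModule.toEnd ℂ k M hh) c ≠ ⊥ → c.re ≤ B)
    -- `e` and `f` act locally finitely:
    (he : ActsLocallyFinitely (LieModule.toEnd ℂ k M e))
    (hf : ActsLocallyFinitely (LieModule.toEnd ℂ k M f)) :
    ∀ m : M, ∃ N : LieSubmodule ℂ k M, FiniteDimensional ℂ N ∧ m ∈ N :=
  sl2_locally_finite_criterion_general k e hh f t hspan M hss he hf
end

section
/- Let g be a reductive complex Lie algebra and k ⊂ g a subalgebra reductive in g such that the centralizer C(k) of k in g equals the center Z(k) of k. Then the intersection of k with the centralizer C(k_ss) of the semisimple part k_ss = [k,k] is a Cartan subalgebra of C(k_ss). -/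
variable (g : Type*) [LieRing g] [LieAlgebra ℂ g]

/-- The centralizer of a subset, as a Lie subalgebra. -/
def setCentralizer (s : Set g) : LieSubalgebra ℂ g where
  carrier := {y : g | ∀ x ∈ s, ⁅x, y⁆ = 0}
  add_mem' {a b} ha hb := by
    intro x hx; rw [lie_add, ha x hx, hb x hx, add_zero]
  zero_mem' := fun x _ => lie_zero x
  smul_mem' c y hy := by intro x hx; rw [lie_smul, hy x hx, smul_zero]
  lie_mem' {a b} ha hb := by
    intro x hx
    rw [leibniz_lie, ha x hx, hb x hx, zero_lie, lie_zero, add_zero]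

lemma mem_setCentralizer {s : Set g} {v : g} :
    v ∈ setCentralizer g s ↔ ∀ x ∈ s, ⁅x, v⁆ = 0 := Iff.rfl

/-- The subalgebra of elements annihilating a fixed vector on the left. -/
def killer (v : g) : LieSubalgebra ℂ g where
  carrier := {w : g | ⁅w, v⁆ = 0}
  add_mem' {a b} ha hb := by
    simp only [Set.mem_setOf_eq] at *
    rw [add_lie, ha, hb, add_zero]
  zero_mem' := zero_lie v
  smul_mem' c y hy := by
    simp only [Set.mem_setOf_eq] at *
    rw [smul_lie, hy, smul_zero]
  lie_mem' {a b} ha hb := by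
    simp only [Set.mem_setOf_eq] at *
    rw [lie_lie, ha, hb, lie_zero, lie_zero, sub_zero]

lemma mem_killer {v w : g} : w ∈ killer g v ↔ ⁅w, v⁆ = 0 := Iff.rfl

lemma mem_setCentralizer_lieSpan {s : Set g} {v : g} (h : ∀ x ∈ s, ⁅x, v⁆ = 0) :
    v ∈ setCentralizer g (LieSubalgebra.lieSpan ℂ g s : Set g) := by
  rw [mem_setCentralizer]
  intro x hx
  exact (LieSubalgebra.lieSpan_le.mpr (fun w hw => (mem_killer g).mpr (h w hw))) hx

/-- The span of brackets of elements of `k`, as a `k`-submodule of `g`. -/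
def bracketSubmodule (k : LieSubalgebra ℂ g) : LieSubmodule ℂ k g where
  toSubmodule := Submodule.span ℂ {z : g | ∃ x ∈ k, ∃ y ∈ k, ⁅x, y⁆ = z}
  lie_mem := by
    intro x m hm
    rw [LieSubalgebra.coe_bracket_of_module]
    show ⁅(x : g), m⁆ ∈ Submodule.span ℂ {z : g | ∃ x ∈ k, ∃ y ∈ k, ⁅x, y⁆ = z}
    have hm' : m ∈ Submodule.span ℂ {z : g | ∃ x ∈ k, ∃ y ∈ k, ⁅x, y⁆ = z} := hm
    clear hm
    induction hm' using Submodule.span_induction with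
    | mem z hz =>
      obtain ⟨a, ha, b, hb, rfl⟩ := hz
      rw [leibniz_lie]
      exact add_mem
        (Submodule.subset_span ⟨⁅(x : g), a⁆, k.lie_mem x.2 ha, b, hb, rfl⟩)
        (Submodule.subset_span ⟨a, ha, ⁅(x : g), b⁆, k.lie_mem x.2 hb, rfl⟩)
    | zero => rw [lie_zero]; exact zero_mem _
    | add u v _ _ hu hv => rw [lie_add]; exact add_mem hu hv
    | smul c u _ hu => rw [lie_smul]; exact Submodule.smul_mem _ c hu

lemma mem_bracketSubmodule {k : LieSubalgebra ℂ g} {v : g} :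
    v ∈ bracketSubmodule g k ↔
      v ∈ Submodule.span ℂ {z : g | ∃ x ∈ k, ∃ y ∈ k, ⁅x, y⁆ = z} := Iff.rfl

/-- Let `g` be a reductive complex Lie algebra and `k ⊂ g` a subalgebra reductive in
`g` such that the centralizer `C(k)` of `k` in `g` equals the center `Z(k)` of `k`.
Then `k ∩ C(k_ss)`, the intersection of `k` with the centralizer of the semisimple
part `k_ss = [k, k]`, is a Cartan subalgebra of `C(k_ss)`. -/
theorem primal_inter_centralizer_is_cartan
    [FiniteDimensional ℂ g]
    -- `g` is reductive:
    (hred : LieAlgebra.radical ℂ g = LieAlgebra.center ℂ g)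
    -- `k` is reductive in `g`: the adjoint action of `k` on `g` is semisimple:
    (k : LieSubalgebra ℂ g)
    (hk : ∀ N : LieSubmodule ℂ k g, ∃ N' : LieSubmodule ℂ k g, IsCompl N N')
    -- `C(k) = Z(k)`:
    (hCZ : setCentralizer g (k : Set g) = k ⊓ setCentralizer g (k : Set g)) :
    -- `k ∩ C(k_ss)` is a Cartan subalgebra of `C(k_ss)`:
    (LieSubalgebra.comap
      (setCentralizer g
        (LieSubalgebra.lieSpan ℂ g {z : g | ∃ x ∈ k, ∃ y ∈ k, ⁅x, y⁆ = z} : Set g)).incl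
      k).IsCartanSubalgebra := by
  classical
  set G : Set g := {z : g | ∃ x ∈ k, ∃ y ∈ k, ⁅x, y⁆ = z} with hGdef
  set C : LieSubalgebra ℂ g := setCentralizer g (LieSubalgebra.lieSpan ℂ g G : Set g)
    with hCdef
  set H : LieSubalgebra ℂ C := LieSubalgebra.comap C.incl k with hHdef
  have hGk : G ⊆ (k : Set g) := by
    rintro z ⟨a, ha, b, hb, rfl⟩; exact k.lie_mem ha hb
  set W : LieSubmodule ℂ k g := bracketSubmodule g k with hWdef
  have hWk : ∀ w ∈ W, w ∈ k := fun w hw => Submodule.span_le.mpr hGk hw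
  -- elements of C kill everything in W
  have hCW : ∀ v ∈ C, ∀ w ∈ W, ⁅w, v⁆ = 0 := by
    intro v hv w hw
    have hle : (Submodule.span ℂ G) ≤ (LieSubalgebra.lieSpan ℂ g G).toSubmodule :=
      Submodule.span_le.mpr fun z hz => LieSubalgebra.subset_lieSpan hz
    exact hv w (hle hw)
  -- membership in H
  have hmemH : ∀ v : C, v ∈ H ↔ (v : g) ∈ k := by
    intro v
    exact Iff.rfl
  -- the decomposition k ⊆ Z(k) + [k,k]
  obtain ⟨W', hcomplW⟩ := hk W
  have hA : ∀ y ∈ k, ∃ z w : g, y = z + w ∧ z ∈ k ∧ (∀ u ∈ k, ⁅u, z⁆ = 0) ∧ w ∈ W := by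
    intro y hy
    have hy' : y ∈ W ⊔ W' := by rw [hcomplW.sup_eq_top]; trivial
    rw [LieSubmodule.mem_sup] at hy'
    obtain ⟨w, hw, z, hz, hsum⟩ := hy'
    refine ⟨z, w, by rw [← hsum, add_comm], ?_, ?_, hw⟩
    · have : z = y - w := by rw [← hsum]; abel
      rw [this]
      exact k.sub_mem hy (hWk w hw)
    · intro u hu
      have hzk : z ∈ k := by
        have : z = y - w := by rw [← hsum]; abel
        rw [this]; exact k.sub_mem hy (hWk w hw)
      have h1 : ⁅u, z⁆ ∈ W := Submodule.subset_span ⟨u, hu, z, hzk, rfl⟩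
      have h2 : ⁅u, z⁆ ∈ W' := by
        have := W'.lie_mem (x := ⟨u, hu⟩) hz
        rwa [LieSubalgebra.coe_bracket_of_module] at this
      have : ⁅u, z⁆ ∈ W ⊓ W' := (LieSubmodule.mem_inf _ _ _).mpr ⟨h1, h2⟩
      rwa [hcomplW.disjoint.eq_bot, LieSubmodule.mem_bot] at this
  -- H is abelian
  haveI habel : IsLieAbelian H := by
    constructor
    intro x y
    apply Subtype.ext
    apply Subtype.ext
    rw [LieSubalgebra.coe_bracket, LieSubalgebra.coe_bracket]
    have hxk : ((x : C) : g) ∈ k := (hmemH (x : C)).mp x.2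
    have hyk : ((y : C) : g) ∈ k := (hmemH (y : C)).mp y.2
    obtain ⟨z, w, heq, hzk, hzc, hw⟩ := hA _ hyk
    show ⁅((x : C) : g), ((y : C) : g)⁆ = (((0 : H) : C) : g)
    rw [heq, lie_add, hzc _ hxk]
    have : ⁅w, ((x : C) : g)⁆ = 0 := hCW _ (x : C).2 w hw
    rw [← lie_skew, this]
    simp
  constructor
  · infer_instance
  · refine le_antisymm ?_ H.le_normalizer
    intro x hx
    rw [LieSubalgebra.mem_normalizer_iff] at hx
    obtain ⟨m, hcompl⟩ := hk k.toLieSubmodule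
    have hxtop : ((x : C) : g) ∈ k.toLieSubmodule ⊔ m := by
      rw [hcompl.sup_eq_top]; trivial
    rw [LieSubmodule.mem_sup] at hxtop
    obtain ⟨xk, hxk, xm, hxm, hsum⟩ := hxtop
    have hxkk : xk ∈ k := hxk
    -- brackets with generators kill xm
    have hgen : ∀ w0 ∈ G, ⁅w0, xm⁆ = 0 := by
      intro w0 hw0
      have hw0k : w0 ∈ k := hGk hw0
      have h1 : ⁅w0, ((x : C) : g)⁆ = 0 :=
        (x : C).2 w0 (LieSubalgebra.subset_lieSpan hw0)
      have h2 : ⁅w0, xm⁆ = -⁅w0, xk⁆ := by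
        have h0 : ⁅w0, xk⁆ + ⁅w0, xm⁆ = 0 := by rw [← lie_add, hsum, h1]
        exact eq_neg_of_add_eq_zero_right h0
      have h3 : ⁅w0, xm⁆ ∈ k.toLieSubmodule := by
        rw [h2]
        exact neg_mem (k.lie_mem hw0k hxkk)
      have h4 : ⁅w0, xm⁆ ∈ m := by
        have := m.lie_mem (x := ⟨w0, hw0k⟩) hxm
        rwa [LieSubalgebra.coe_bracket_of_module] at this
      have : ⁅w0, xm⁆ ∈ k.toLieSubmodule ⊓ m := (LieSubmodule.mem_inf _ _ _).mpr ⟨h3, h4⟩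
      rwa [hcompl.disjoint.eq_bot, LieSubmodule.mem_bot] at this
    -- hence xm centralizes all of the span
    have hxmC : xm ∈ C := mem_setCentralizer_lieSpan g hgen
    -- xm centralizes all of k
    have hxmCk : ∀ u ∈ k, ⁅u, xm⁆ = 0 := by
      intro u hu
      obtain ⟨z, w, heq, hzk, hzc, hw⟩ := hA u hu
      have hzC : z ∈ C := mem_setCentralizer_lieSpan g
        (fun w0 hw0 => hzc w0 (hGk hw0))
      have hzH : (⟨z, hzC⟩ : C) ∈ H := (hmemH _).mpr hzk
      have hbr : ⁅(x : C), (⟨z, hzC⟩ : C)⁆ ∈ H := hx _ hzH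
      have hbrk : ⁅((x : C) : g), z⁆ ∈ k := by
        have := (hmemH _).mp hbr
        rwa [LieSubalgebra.coe_bracket] at this
      have hza : ⁅z, ((x : C) : g)⁆ ∈ k := by
        rw [← lie_skew]; exact k.neg_mem hbrk
      have hz1 : ⁅z, xm⁆ ∈ k.toLieSubmodule := by
        have h5 : ⁅z, xm⁆ = ⁅z, ((x : C) : g)⁆ - ⁅z, xk⁆ := by
          have h0 : ⁅z, xk⁆ + ⁅z, xm⁆ = ⁅z, ((x : C) : g)⁆ := by rw [← lie_add, hsum]
          exact eq_sub_of_add_eq' h0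
        rw [h5]
        exact k.sub_mem hza (k.lie_mem hzk hxkk)
      have hz2 : ⁅z, xm⁆ ∈ m := by
        have := m.lie_mem (x := ⟨z, hzk⟩) hxm
        rwa [LieSubalgebra.coe_bracket_of_module] at this
      have hz0 : ⁅z, xm⁆ = 0 := by
        have : ⁅z, xm⁆ ∈ k.toLieSubmodule ⊓ m := (LieSubmodule.mem_inf _ _ _).mpr ⟨hz1, hz2⟩
        rwa [hcompl.disjoint.eq_bot, LieSubmodule.mem_bot] at this
      have hw0 : ⁅w, xm⁆ = 0 := hCW xm hxmC w hw
      rw [heq, add_lie, hz0, hw0, add_zero]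
    -- so xm ∈ C(k) ⊆ k, hence xm = 0
    have hxmk : xm ∈ k := by
      have : xm ∈ setCentralizer g (k : Set g) := hxmCk
      rw [hCZ] at this
      exact this.1
    have hxm0 : xm = 0 := by
      have : xm ∈ k.toLieSubmodule ⊓ m := (LieSubmodule.mem_inf _ _ _).mpr ⟨hxmk, hxm⟩
      rwa [hcompl.disjoint.eq_bot, LieSubmodule.mem_bot] at this
    have : ((x : C) : g) ∈ k := by
      rw [← hsum, hxm0, add_zero]; exact hxkk
    exact (hmemH x).mpr this
end
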